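/- Let ψ:[t₀,∞)→(0,∞) be non-increasing with tψ(t)<1 for all large t, and let Ψ(t)=tψ(t)/(1−tψ(t)). Then, within the irrational numbers of [0,1), one has the inclusions G(Ψ) ⊂ D(ψ)^c ⊂ G(Ψ/4). -/

import Mathlib

open Filter MeasureTheory Set

/-- The set `D(ψ)` of `ψ`-Dirichlet improvable numbers: those `x ∈ ℝ` such that for all
sufficiently large `t` the system `|qx - p| < ψ t`, `|q| < t` has a nontrivial integer
solution `(p, q)`. -/
def DirichletSet (ψ : ℝ → ℝ) : Set ℝ :=
  {x | ∃ N : ℝ, ∀ t : ℝ, t > N →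
    ∃ p q : ℤ, (p, q) ≠ (0, 0) ∧ |(q : ℝ) * x - p| < ψ t ∧ |(q : ℝ)| < t}

/-- The Gauss map `T(x) = 1/x mod 1`, with `T(0) = 0`. -/
noncomputable def gaussMap (x : ℝ) : ℝ := if x = 0 then 0 else Int.fract (1 / x)

/-- `cfA x n` is the `n`-th partial quotient `a_n(x)` of the continued fraction
expansion of `x ∈ [0,1)`, for `n ≥ 1`: `a_n(x) = ⌊1 / T^{n-1}(x)⌋`. -/
noncomputable def cfA (x : ℝ) (n : ℕ) : ℕ := ⌊1 / (gaussMap^[n - 1] x)⌋₊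

/-- `cfQ x n` is the denominator `q_n(x)` of the `n`-th convergent of `x`:
`q₀ = 1`, `q₁ = a₁`, `q_{n+2} = a_{n+2} q_{n+1} + q_n`. -/
noncomputable def cfQ (x : ℝ) : ℕ → ℕ
  | 0 => 1
  | 1 => cfA x 1
  | (n + 2) => cfA x (n + 2) * cfQ x (n + 1) + cfQ x n

/-- `G(Φ)`: the set of irrational `x ∈ [0,1)` with `a_n(x) a_{n+1}(x) > Φ(q_n(x))` for
infinitely many `n`. -/
def GSet (Φ : ℝ → ℝ) : Set ℝ :=
  {x | x ∈ Ico (0 : ℝ) 1 ∧ Irrational x ∧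
    {n : ℕ | 0 < n ∧ Φ (cfQ x n) < (cfA x n : ℝ) * cfA x (n + 1)}.Infinite}

/-!
The convergent errors `r_n = q_n x - p_n` satisfy `|r_{n+1}| = T^{n+1}x · |r_n|` and
`q_{n+1}|r_n| + q_n|r_{n+1}| = 1`, and `|r_n|` is the smallest value of `|qx - p|` over
`0 < |q| < q_{n+1}`. Hence `x ∉ D(ψ)` exactly when `ψ(q_{n+1}) ≤ |r_n|` for infinitely many
`n` (for the converse, place `t` in `(q_n, q_{n+1}]` and use that `ψ` is non-increasing). Applying
the increasing map `u ↦ u/(1-u)` to `q_{n+1}ψ(q_{n+1}) ≤ q_{n+1}|r_n|`, that inequality becomes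
`Ψ(q_{n+1}) ≤ q_{n+1}/(q_n T^{n+1}x)`, and this ratio lies strictly between `a_{n+1}a_{n+2}` and
`4a_{n+1}a_{n+2}`, because `q_{n+1}/q_n ∈ [a_{n+1}, a_{n+1}+1]` and
`1/T^{n+1}x ∈ (a_{n+2}, a_{n+2}+1)`.
-/

structure IrrationalInUnitInterval (x : ℝ) : Prop where
  irrational : Irrational x
  pos : 0 < x
  lt_one : x < 1

noncomputable def cfP (x : ℝ) : ℕ → ℤ
  | 0 => 0
  | 1 => 1
  | (n + 2) => cfA x (n + 2) * cfP x (n + 1) + cfP x n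

noncomputable def cfErr (x : ℝ) (n : ℕ) : ℝ := cfQ x n * x - cfP x n

theorem strictMonoOn_div_one_sub : StrictMonoOn (fun u : ℝ => u / (1 - u)) (Iio 1) := by
  intro u hu v hv huv
  dsimp only
  rw [div_lt_div_iff₀ (sub_pos.2 hu) (sub_pos.2 hv)]
  nlinarith

theorem exists_lt_le_succ_of_tendsto_atTop {α : Type*} [LinearOrder α] {f : ℕ → α}
    (hf : Tendsto f atTop atTop) {t : α} (ht : f 0 < t) : ∃ m, f m < t ∧ t ≤ f (m + 1) := by
  classical
  have hex : ∃ n, t ≤ f n := (hf.eventually_ge_atTop t).exists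
  obtain ⟨m, hm⟩ : ∃ m, Nat.find hex = m + 1 :=
    Nat.exists_eq_succ_of_ne_zero fun h0 => (Nat.find_spec hex).not_gt (h0 ▸ ht)
  exact ⟨m, not_le.1 (Nat.find_min hex (by omega)), hm ▸ Nat.find_spec hex⟩

theorem infinite_setOf_pos_and_iff_frequently_succ (P : ℕ → Prop) :
    {n : ℕ | 0 < n ∧ P n}.Infinite ↔ ∃ᶠ m in atTop, P (m + 1) := by
  rw [← Nat.frequently_atTop_iff_infinite, ← frequently_map (m := fun m => m + 1) (P := P),
    map_add_atTop_eq_nat]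
  exact frequently_congr ((eventually_gt_atTop 0).mono fun n hn => and_iff_right hn)

theorem one_div_eq_floor_add_gaussMap {y : ℝ} (hy : 0 < y) :
    1 / y = ⌊1 / y⌋₊ + gaussMap y := by
  rw [gaussMap, if_neg hy.ne', natCast_floor_eq_intCast_floor (by positivity),
    Int.floor_add_fract]

theorem cfA_mul_cfQ_le_cfQ_succ (x : ℝ) : ∀ n, cfA x (n + 1) * cfQ x n ≤ cfQ x (n + 1)
  | 0 => by simp [cfQ]
  | n + 1 => by rw [cfQ]; exact Nat.le_add_right _ _

theorem cfQ_succ_mul_cfP_sub_cfQ_mul_cfP_succ (x : ℝ) :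
    ∀ n, (cfQ x (n + 1) : ℤ) * cfP x n - cfQ x n * cfP x (n + 1) = (-1) ^ (n + 1)
  | 0 => by simp [cfQ, cfP]
  | n + 1 => by
    have ih := cfQ_succ_mul_cfP_sub_cfQ_mul_cfP_succ x n
    rw [cfQ, cfP]
    push_cast
    linear_combination -ih

theorem exists_int_combination_cfQ_cfP (x : ℝ) (n : ℕ) (p q : ℤ) :
    ∃ μ ν : ℤ,
      q = μ * cfQ x (n + 1) + ν * cfQ x n ∧ p = μ * cfP x (n + 1) + ν * cfP x n := by
  have hdet := cfQ_succ_mul_cfP_sub_cfQ_mul_cfP_succ x n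
  have hsq : ((-1 : ℤ) ^ (n + 1)) ^ 2 = 1 := by
    rw [← pow_mul]; exact Even.neg_one_pow ⟨n + 1, by ring⟩
  refine ⟨(-1) ^ (n + 1) * (cfP x n * q - cfQ x n * p),
    (-1) ^ (n + 1) * (cfQ x (n + 1) * p - cfP x (n + 1) * q), ?_, ?_⟩
  · linear_combination (-q * (-1) ^ (n + 1)) * hdet - q * hsq
  · linear_combination (-p * (-1) ^ (n + 1)) * hdet - p * hsq

theorem one_le_abs_sub_mul_of_mul_nonpos {μ ν : ℤ} {X : ℝ} (hX : 0 ≤ X) (hν : ν ≠ 0)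
    (hμν : μ * ν ≤ 0) : 1 ≤ |ν - μ * X| := by
  have hν1 : (1 : ℝ) ≤ |(ν : ℝ)| := by exact_mod_cast Int.one_le_abs hν
  have hμνR : (μ : ℝ) * ν ≤ 0 := by exact_mod_cast hμν
  have hle : (ν : ℝ) * (ν - μ * X) ≤ |(ν : ℝ)| * |ν - μ * X| := by
    rw [← abs_mul]; exact le_abs_self _
  nlinarith [abs_mul_abs_self (ν : ℝ), mul_nonpos_of_nonpos_of_nonneg hμνR hX]

namespace IrrationalInUnitInterval

variable {x : ℝ}

theorem apply_gaussMap (h : IrrationalInUnitInterval x) :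
    IrrationalInUnitInterval (gaussMap x) := by
  have hinv : Irrational (1 / x) := by simpa only [one_div] using h.irrational.inv
  rw [gaussMap, if_neg h.pos.ne']
  exact ⟨hinv.sub_intCast _, Int.fract_pos.2 (hinv.ne_int _), Int.fract_lt_one _⟩

theorem iterate (h : IrrationalInUnitInterval x) :
    ∀ n, IrrationalInUnitInterval (gaussMap^[n] x)
  | 0 => h
  | n + 1 => by rw [Function.iterate_succ_apply']; exact (h.iterate n).apply_gaussMap

theorem cfA_succ_add_gaussMap_iterate_mul (h : IrrationalInUnitInterval x) (n : ℕ) :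
    (cfA x (n + 1) + gaussMap^[n + 1] x) * gaussMap^[n] x = 1 := by
  have hX := (h.iterate n).pos
  calc _ = 1 / gaussMap^[n] x * gaussMap^[n] x := by
        rw [Function.iterate_succ_apply', one_div_eq_floor_add_gaussMap hX]; rfl
    _ = 1 := one_div_mul_cancel hX.ne'

theorem one_le_cfA (h : IrrationalInUnitInterval x) (n : ℕ) : 1 ≤ cfA x (n + 1) :=
  Nat.le_floor <| by
    exact_mod_cast one_le_one_div (h.iterate n).pos (h.iterate n).lt_one.le

theorem one_le_cfQ (h : IrrationalInUnitInterval x) : ∀ n, 1 ≤ cfQ x n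
  | 0 => le_rfl
  | 1 => h.one_le_cfA 0
  | n + 2 => by
    rw [cfQ]
    nlinarith [h.one_le_cfA (n + 1), h.one_le_cfQ (n + 1)]

theorem cfQ_le_cfQ_succ (h : IrrationalInUnitInterval x) (n : ℕ) : cfQ x n ≤ cfQ x (n + 1) :=
  le_trans (Nat.le_mul_of_pos_left _ (h.one_le_cfA n)) (cfA_mul_cfQ_le_cfQ_succ x n)

theorem cfQ_succ_le (h : IrrationalInUnitInterval x) :
    ∀ n, cfQ x (n + 1) ≤ (cfA x (n + 1) + 1) * cfQ x n
  | 0 => by simp [cfQ]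
  | n + 1 => by
    rw [cfQ, add_one_mul]
    exact Nat.add_le_add_left (h.cfQ_le_cfQ_succ n) _

theorem le_cfQ (h : IrrationalInUnitInterval x) : ∀ n, n ≤ cfQ x n
  | 0 => Nat.zero_le _
  | 1 => h.one_le_cfA 0
  | n + 2 => by
    rw [cfQ]
    nlinarith [h.one_le_cfA (n + 1), h.le_cfQ (n + 1), h.one_le_cfQ n]

theorem tendsto_cfQ (h : IrrationalInUnitInterval x) :
    Tendsto (fun n => (cfQ x n : ℝ)) atTop atTop :=
  tendsto_atTop_mono (fun n => by exact_mod_cast h.le_cfQ n) tendsto_natCast_atTop_atTop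

theorem cfErr_succ (h : IrrationalInUnitInterval x) :
    ∀ n, cfErr x (n + 1) = -gaussMap^[n + 1] x * cfErr x n
  | 0 => by
    have key := h.cfA_succ_add_gaussMap_iterate_mul 0
    simp only [Function.iterate_zero, id] at key
    simp only [cfErr, cfQ, cfP, Nat.cast_one, Int.cast_zero, Int.cast_one, one_mul, sub_zero]
    linear_combination key
  | n + 1 => by
    have key := h.cfA_succ_add_gaussMap_iterate_mul (n + 1)
    have hrec : cfErr x (n + 2) = cfA x (n + 2) * cfErr x (n + 1) + cfErr x n := by
      simp only [cfErr, cfQ, cfP]; push_cast; ring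
    rw [hrec, h.cfErr_succ n]
    linear_combination -cfErr x n * key

theorem abs_cfErr_succ (h : IrrationalInUnitInterval x) (n : ℕ) :
    |cfErr x (n + 1)| = gaussMap^[n + 1] x * |cfErr x n| := by
  rw [h.cfErr_succ, abs_mul, abs_neg, abs_of_pos (h.iterate (n + 1)).pos]

theorem abs_cfErr_pos (h : IrrationalInUnitInterval x) : ∀ n, 0 < |cfErr x n|
  | 0 => by simp [cfErr, cfQ, cfP, h.pos.ne']
  | n + 1 => by
    rw [h.abs_cfErr_succ]; exact mul_pos (h.iterate (n + 1)).pos (h.abs_cfErr_pos n)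

theorem cfQ_succ_mul_abs_cfErr_add_cfQ_mul_abs_cfErr_succ (h : IrrationalInUnitInterval x)
    (n : ℕ) : cfQ x (n + 1) * |cfErr x n| + cfQ x n * |cfErr x (n + 1)| = 1 := by
  have hdet : (cfQ x (n + 1) : ℝ) * cfErr x n - cfQ x n * cfErr x (n + 1) = (-1) ^ n := by
    have := congrArg (Int.cast (R := ℝ)) (cfQ_succ_mul_cfP_sub_cfQ_mul_cfP_succ x n)
    push_cast at this
    simp only [cfErr]
    linear_combination -this
  have hX := (h.iterate (n + 1)).pos
  calc (cfQ x (n + 1) : ℝ) * |cfErr x n| + cfQ x n * |cfErr x (n + 1)|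
      = |cfErr x n * (cfQ x (n + 1) + cfQ x n * gaussMap^[n + 1] x)| := by
        rw [h.abs_cfErr_succ, abs_mul,
          abs_of_nonneg (add_nonneg (Nat.cast_nonneg _) (mul_nonneg (Nat.cast_nonneg _) hX.le))]
        ring
    _ = |(cfQ x (n + 1) : ℝ) * cfErr x n - cfQ x n * cfErr x (n + 1)| := by
        rw [h.cfErr_succ]; ring_nf
    _ = 1 := by rw [hdet, abs_pow, abs_neg, abs_one, one_pow]

theorem abs_cfErr_lt_one (h : IrrationalInUnitInterval x) (n : ℕ) : |cfErr x n| < 1 := by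
  have hsum := h.cfQ_succ_mul_abs_cfErr_add_cfQ_mul_abs_cfErr_succ n
  have hq0 : (1 : ℝ) ≤ cfQ x n := by exact_mod_cast h.one_le_cfQ n
  have hq1 : (1 : ℝ) ≤ cfQ x (n + 1) := by exact_mod_cast h.one_le_cfQ (n + 1)
  nlinarith [h.abs_cfErr_pos n, h.abs_cfErr_pos (n + 1)]

theorem abs_cfErr_le_abs_sub (h : IrrationalInUnitInterval x) (n : ℕ) {p q : ℤ} (hq0 : 0 < q)
    (hq : q < cfQ x (n + 1)) : |cfErr x n| ≤ |q * x - p| := by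
  obtain ⟨μ, ν, rfl, rfl⟩ := exists_int_combination_cfQ_cfP x n p q
  have hQ : (0 : ℤ) < cfQ x n := by exact_mod_cast h.one_le_cfQ n
  have hν : ν ≠ 0 := by
    rintro rfl
    rcases le_or_gt μ 0 with hμ | hμ <;> nlinarith
  have hμν : μ * ν ≤ 0 := by
    by_contra! hpos
    rcases lt_or_gt_of_ne hν with hν' | hν'
    · nlinarith [neg_of_mul_pos_left hpos hν'.le]
    · nlinarith [pos_of_mul_pos_left hpos hν'.le]
  have hcomb : ((μ * cfQ x (n + 1) + ν * cfQ x n : ℤ) : ℝ) * x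
      - ((μ * cfP x (n + 1) + ν * cfP x n : ℤ) : ℝ)
      = cfErr x n * (ν - μ * gaussMap^[n + 1] x) := by
    have hμ : (μ : ℝ) * cfErr x (n + 1) = μ * (-gaussMap^[n + 1] x * cfErr x n) := by
      rw [h.cfErr_succ]
    simp only [cfErr] at hμ ⊢
    push_cast
    linear_combination hμ
  rw [hcomb, abs_mul]
  exact le_mul_of_one_le_right (abs_nonneg _)
    (one_le_abs_sub_mul_of_mul_nonpos (h.iterate (n + 1)).pos.le hν hμν)

theorem abs_cfErr_le_of_ne_zero (h : IrrationalInUnitInterval x) (n : ℕ) {p q : ℤ}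
    (hpq : (p, q) ≠ (0, 0)) (hq : |(q : ℝ)| < cfQ x (n + 1)) : |cfErr x n| ≤ |q * x - p| := by
  rcases lt_trichotomy q 0 with hneg | rfl | hpos
  · have hq' : -q < cfQ x (n + 1) := by
      rw [abs_of_neg (by exact_mod_cast hneg)] at hq; exact_mod_cast hq
    have := h.abs_cfErr_le_abs_sub n (p := -p) (neg_pos.2 hneg) hq'
    rwa [Int.cast_neg, Int.cast_neg, neg_mul, neg_sub_neg, abs_sub_comm] at this
  · have hp : p ≠ 0 := by simpa using hpq
    have hp1 : (1 : ℝ) ≤ |(p : ℝ)| := by exact_mod_cast Int.one_le_abs hp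
    rw [Int.cast_zero, zero_mul, zero_sub, abs_neg]
    exact (h.abs_cfErr_lt_one n).le.trans hp1
  · rw [abs_of_pos (by exact_mod_cast hpos)] at hq
    exact h.abs_cfErr_le_abs_sub n hpos (by exact_mod_cast hq)

theorem le_abs_cfErr_iff (h : IrrationalInUnitInterval x) (n : ℕ) {c : ℝ}
    (hc : cfQ x (n + 1) * c < 1) :
    c ≤ |cfErr x n| ↔ cfQ x (n + 1) * c / (1 - cfQ x (n + 1) * c)
      ≤ cfQ x (n + 1) / (cfQ x n * gaussMap^[n + 1] x) := by
  have hsum := h.cfQ_succ_mul_abs_cfErr_add_cfQ_mul_abs_cfErr_succ n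
  rw [h.abs_cfErr_succ] at hsum
  have hq0 : (0 : ℝ) < cfQ x n := by exact_mod_cast h.one_le_cfQ n
  have hq1 : (0 : ℝ) < cfQ x (n + 1) := by exact_mod_cast h.one_le_cfQ (n + 1)
  have hX := (h.iterate (n + 1)).pos
  have hr := h.abs_cfErr_pos n
  have hb : 0 < (cfQ x n : ℝ) * (gaussMap^[n + 1] x * |cfErr x n|) := by positivity
  have ha : (cfQ x (n + 1) : ℝ) * |cfErr x n| < 1 := by linarith
  have hratio : cfQ x (n + 1) * |cfErr x n| / (1 - cfQ x (n + 1) * |cfErr x n|)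
      = cfQ x (n + 1) / (cfQ x n * gaussMap^[n + 1] x) := by
    rw [show 1 - (cfQ x (n + 1) : ℝ) * |cfErr x n|
      = cfQ x n * (gaussMap^[n + 1] x * |cfErr x n|) by linarith]
    field_simp
  rw [← hratio]
  exact (mul_le_mul_iff_right₀ hq1).symm.trans (strictMonoOn_div_one_sub.le_iff_le hc ha).symm

theorem cfA_mul_cfA_lt_cfQ_div (h : IrrationalInUnitInterval x) (n : ℕ) :
    (cfA x (n + 1) * cfA x (n + 2) : ℝ) < cfQ x (n + 1) / (cfQ x n * gaussMap^[n + 1] x) := by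
  have hq0 : (1 : ℝ) ≤ cfQ x n := by exact_mod_cast h.one_le_cfQ n
  have ha1 : (1 : ℝ) ≤ cfA x (n + 1) := by exact_mod_cast h.one_le_cfA n
  have hq1 : (cfA x (n + 1) * cfQ x n : ℝ) ≤ cfQ x (n + 1) := by
    exact_mod_cast cfA_mul_cfQ_le_cfQ_succ x n
  have hX := (h.iterate (n + 1)).pos
  have hX' := (h.iterate (n + 2)).pos
  have key := h.cfA_succ_add_gaussMap_iterate_mul (n + 1)
  have hlt : (cfA x (n + 2) : ℝ) * gaussMap^[n + 1] x < 1 := by nlinarith [mul_pos hX' hX]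
  rw [lt_div_iff₀ (by positivity)]
  calc (cfA x (n + 1) * cfA x (n + 2) : ℝ) * (cfQ x n * gaussMap^[n + 1] x)
      = (cfA x (n + 1) * cfQ x n) * (cfA x (n + 2) * gaussMap^[n + 1] x) := by ring
    _ < cfA x (n + 1) * cfQ x n := mul_lt_of_lt_one_right (by nlinarith) hlt
    _ ≤ cfQ x (n + 1) := hq1

theorem cfQ_div_lt_four_mul_cfA_mul_cfA (h : IrrationalInUnitInterval x) (n : ℕ) :
    cfQ x (n + 1) / (cfQ x n * gaussMap^[n + 1] x) < 4 * (cfA x (n + 1) * cfA x (n + 2) : ℝ) := by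
  have hq0 : (1 : ℝ) ≤ cfQ x n := by exact_mod_cast h.one_le_cfQ n
  have ha1 : (1 : ℝ) ≤ cfA x (n + 1) := by exact_mod_cast h.one_le_cfA n
  have ha2 : (1 : ℝ) ≤ cfA x (n + 2) := by exact_mod_cast h.one_le_cfA (n + 1)
  have hq1 : (cfQ x (n + 1) : ℝ) ≤ (cfA x (n + 1) + 1) * cfQ x n := by
    exact_mod_cast h.cfQ_succ_le n
  have hX := (h.iterate (n + 1)).pos
  have hX' := (h.iterate (n + 2)).lt_one
  have key := h.cfA_succ_add_gaussMap_iterate_mul (n + 1)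
  have hlt : 1 < (cfA x (n + 2) + 1) * gaussMap^[n + 1] x := by nlinarith
  have hfour : ((cfA x (n + 1) : ℝ) + 1) * (cfA x (n + 2) + 1)
      ≤ 4 * (cfA x (n + 1) * cfA x (n + 2)) := by nlinarith
  rw [div_lt_iff₀ (by positivity)]
  calc (cfQ x (n + 1) : ℝ) ≤ (cfA x (n + 1) + 1) * cfQ x n := hq1
    _ < (cfA x (n + 1) + 1) * cfQ x n * ((cfA x (n + 2) + 1) * gaussMap^[n + 1] x) :=
        lt_mul_of_one_lt_right (by positivity) hlt
    _ = ((cfA x (n + 1) : ℝ) + 1) * (cfA x (n + 2) + 1) * (cfQ x n * gaussMap^[n + 1] x) := by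
        ring
    _ ≤ 4 * (cfA x (n + 1) * cfA x (n + 2)) * (cfQ x n * gaussMap^[n + 1] x) :=
        mul_le_mul_of_nonneg_right hfour (by positivity)

theorem notMem_dirichletSet_of_frequently (h : IrrationalInUnitInterval x) {ψ : ℝ → ℝ}
    (hψ : ∃ᶠ n in atTop, ψ (cfQ x (n + 1)) ≤ |cfErr x n|) : x ∉ DirichletSet ψ := by
  rintro ⟨N, hN⟩
  obtain ⟨n, hψn, hNn⟩ := (hψ.and_eventually
    ((h.tendsto_cfQ.comp (tendsto_add_atTop_nat 1)).eventually_gt_atTop N)).exists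
  obtain ⟨p, q, hpq, hlt, hq⟩ := hN _ hNn
  exact (hlt.trans_le hψn).not_ge (h.abs_cfErr_le_of_ne_zero n hpq hq)

theorem frequently_of_notMem_dirichletSet (h : IrrationalInUnitInterval x) {ψ : ℝ → ℝ}
    {t₀ : ℝ} (hψ : AntitoneOn ψ (Ici t₀)) (hx : x ∉ DirichletSet ψ) :
    ∃ᶠ n in atTop, ψ (cfQ x (n + 1)) ≤ |cfErr x n| := by
  rw [frequently_atTop]
  intro M
  simp only [DirichletSet, mem_ofPred_eq, not_exists, not_forall, not_and, not_lt] at hx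
  obtain ⟨t, ht, hsol⟩ := hx (max t₀ (cfQ x M))
  obtain ⟨k, hk, hk'⟩ := exists_lt_le_succ_of_tendsto_atTop
    (h.tendsto_cfQ.comp (tendsto_add_atTop_nat M)) (by simpa using (le_max_right _ _).trans_lt ht)
  simp only [Function.comp_apply, add_right_comm k 1 M] at hk hk'
  refine ⟨k + M, Nat.le_add_left M k, ?_⟩
  have hQ : cfQ x (k + M) ≠ 0 := Nat.one_le_iff_ne_zero.mp (h.one_le_cfQ _)
  have hψt : ψ t ≤ |cfErr x (k + M)| := by
    by_contra! hlt
    have := hsol (cfP x (k + M)) (cfQ x (k + M)) (by simp [hQ]) hlt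
    rw [Int.cast_natCast, abs_of_nonneg (Nat.cast_nonneg _)] at this
    exact this.not_gt hk
  have ht₀ : t₀ ≤ t := (le_max_left _ _).trans ht.le
  exact (hψ ht₀ (ht₀.trans hk') hk').trans hψt

end IrrationalInUnitInterval

theorem GSet_subset_dirichlet_nonimprovable_subset_GSet_quarter_general
    (t₀ : ℝ) (ψ : ℝ → ℝ)
    (hψanti : AntitoneOn ψ (Ici t₀))
    (hψ1 : ∃ T : ℝ, ∀ t ≥ T, t * ψ t < 1)
    (Ψ : ℝ → ℝ) (hΨ : ∀ t, Ψ t = t * ψ t / (1 - t * ψ t))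
    (x : ℝ) (hx : x ∈ Ico (0 : ℝ) 1) (hirr : Irrational x) :
    (x ∈ GSet Ψ → x ∈ (DirichletSet ψ)ᶜ) ∧
    (x ∈ (DirichletSet ψ)ᶜ → x ∈ GSet (fun t => Ψ t / 4)) := by
  have h : IrrationalInUnitInterval x :=
    ⟨hirr, hx.1.lt_of_ne fun h0 => hirr.ne_int 0 (by simp [h0]), hx.2⟩
  obtain ⟨T, hT⟩ := hψ1
  have hsmall : ∀ᶠ n in atTop, cfQ x (n + 1) * ψ (cfQ x (n + 1)) < 1 :=
    ((h.tendsto_cfQ.comp (tendsto_add_atTop_nat 1)).eventually_ge_atTop T).mono fun n => hT _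
  refine ⟨fun ⟨_, _, hG⟩ => h.notMem_dirichletSet_of_frequently ?_,
    fun hD => ⟨hx, hirr, ?_⟩⟩
  · rw [infinite_setOf_pos_and_iff_frequently_succ] at hG
    refine (hG.and_eventually hsmall).mono fun n ⟨hlt, hc⟩ => (h.le_abs_cfErr_iff n hc).2 ?_
    rw [hΨ] at hlt
    exact hlt.le.trans (h.cfA_mul_cfA_lt_cfQ_div n).le
  · rw [infinite_setOf_pos_and_iff_frequently_succ]
    refine ((h.frequently_of_notMem_dirichletSet hψanti hD).and_eventually hsmall).mono
      fun n ⟨hle, hc⟩ => ?_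
    dsimp only
    rw [hΨ]
    linarith [(h.le_abs_cfErr_iff n hc).1 hle, h.cfQ_div_lt_four_mul_cfA_mul_cfA n]

/-- **The inclusions `G(Ψ) ⊂ D(ψ)ᶜ ⊂ G(Ψ/4)`**, within the irrational numbers of
`[0,1)`. -/
theorem GSet_subset_dirichlet_nonimprovable_subset_GSet_quarter
    (t₀ : ℝ) (ht₀ : 1 ≤ t₀) (ψ : ℝ → ℝ)
    (hψpos : ∀ t ∈ Ici t₀, 0 < ψ t) (hψanti : AntitoneOn ψ (Ici t₀))
    (hψ1 : ∃ T : ℝ, ∀ t ≥ T, t * ψ t < 1)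
    (Ψ : ℝ → ℝ) (hΨ : ∀ t, Ψ t = t * ψ t / (1 - t * ψ t))
    (x : ℝ) (hx : x ∈ Ico (0 : ℝ) 1) (hirr : Irrational x) :
    (x ∈ GSet Ψ → x ∈ (DirichletSet ψ)ᶜ) ∧
    (x ∈ (DirichletSet ψ)ᶜ → x ∈ GSet (fun t => Ψ t / 4)) :=
  GSet_subset_dirichlet_nonimprovable_subset_GSet_quarter_general t₀ ψ hψanti hψ1 Ψ hΨ x hx hirr
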